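/- arXiv:2206.05564 — 2 statements merged into one kernel-verified Lean document; each statement's English description precedes it below -/
import Mathlib

section
/- Let D ∈ ℕ, λ ∈ ℝ, u_s, ε ∈ ℝ^D, R_s ∈ ℝ^{D×D}, and let F, G : ℝ → ℝ^{D×D} and t ↦ Σ_t⁻¹ be continuous on an interval I containing s. Let Ψ, Ψ̂ : ℝ → ℝ^{D×D} be differentiable on I with Ψ'(t) = F_t·Ψ(t), Ψ̂'(t) = F̂_t·Ψ̂(t) where F̂_t := F_t + ((1+λ²)/2) G_t G_tᵀ Σ_t⁻¹, and Ψ(s) = Ψ̂(s) = I. If m : ℝ → ℝ^D is differentiable on I with m(s) = u_s and m'(τ) = F̂_τ·m(τ) + ((1+λ²)/2) G_τ G_τᵀ Σ_τ⁻¹·Ψ(τ)·(R_s·ε − u_s) for all τ ∈ I, then m(t) = Ψ(t)·u_s + (Ψ̂(t) − Ψ(t))·R_s·ε for all t ∈ I. This is the mean of the one-step stochastic gDDIM update. -/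
open Matrix Set

attribute [local instance] Matrix.normedAddCommGroup Matrix.normedSpace

/-- Auxiliary: `A ↦ A *ᵥ c` as a linear map in the matrix. -/
def mulVecRight (D : ℕ) (c : Fin D → ℝ) :
    Matrix (Fin D) (Fin D) ℝ →ₗ[ℝ] (Fin D → ℝ) where
  toFun A := A *ᵥ c
  map_add' A B := Matrix.add_mulVec A B c
  map_smul' r A := Matrix.smul_mulVec r A c

/-- Auxiliary: `A ↦ A.mulVecLin` as a linear map into continuous linear maps. -/
noncomputable def matCLM (D : ℕ) :
    Matrix (Fin D) (Fin D) ℝ →ₗ[ℝ] ((Fin D → ℝ) →L[ℝ] (Fin D → ℝ)) where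
  toFun A := LinearMap.toContinuousLinearMap A.mulVecLin
  map_add' A B := by ext v; simp [Matrix.add_mulVec]
  map_smul' r A := by ext v; simp [Matrix.smul_mulVec]

lemma matCLM_apply (D : ℕ) (A : Matrix (Fin D) (Fin D) ℝ) (v : Fin D → ℝ) :
    matCLM D A v = A *ᵥ v := rfl

lemma hasDerivAt_mulVec {D : ℕ} {Ψ : ℝ → Matrix (Fin D) (Fin D) ℝ}
    {Ψ' : Matrix (Fin D) (Fin D) ℝ} {t : ℝ} (h : HasDerivAt Ψ Ψ' t)
    (c : Fin D → ℝ) :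
    HasDerivAt (fun τ => Ψ τ *ᵥ c) (Ψ' *ᵥ c) t :=
  ((mulVecRight D c).toContinuousLinearMap.hasFDerivAt.comp_hasDerivAt t h :)

/-- The mean of the one-step stochastic gDDIM update:
`m(t) = Ψ(t)·u_s + (Ψ̂(t) − Ψ(t))·R_s·ε`. -/
theorem gddim_stochastic_mean (D : ℕ) (lam : ℝ) (u_s ε : Fin D → ℝ)
    (R_s : Matrix (Fin D) (Fin D) ℝ)
    (I : Set ℝ) (hI : Convex ℝ I) (s : ℝ) (hs : s ∈ I)
    (F G Sinv Ψ Ψh : ℝ → Matrix (Fin D) (Fin D) ℝ)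
    (hF : ContinuousOn F I) (hG : ContinuousOn G I) (hSinv : ContinuousOn Sinv I)
    (hΨ : ∀ t ∈ I, HasDerivAt Ψ (F t * Ψ t) t)
    (hΨh : ∀ t ∈ I, HasDerivAt Ψh
      ((F t + ((1 + lam^2)/2 : ℝ) • (G t * (G t)ᵀ * Sinv t)) * Ψh t) t)
    (hΨs : Ψ s = 1) (hΨhs : Ψh s = 1)
    (m : ℝ → Fin D → ℝ) (hms : m s = u_s)
    (hm : ∀ τ ∈ I, HasDerivAt m
      ((F τ + ((1 + lam^2)/2 : ℝ) • (G τ * (G τ)ᵀ * Sinv τ)) *ᵥ m τ +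
        (((1 + lam^2)/2 : ℝ) • (G τ * (G τ)ᵀ * Sinv τ)) *ᵥ
          (Ψ τ *ᵥ (R_s *ᵥ ε - u_s))) τ) :
    ∀ t ∈ I, m t = Ψ t *ᵥ u_s + (Ψh t - Ψ t) *ᵥ (R_s *ᵥ ε) := by
  -- abbreviations
  set r : Fin D → ℝ := R_s *ᵥ ε with hr
  set B : ℝ → Matrix (Fin D) (Fin D) ℝ :=
    fun τ => ((1 + lam^2)/2 : ℝ) • (G τ * (G τ)ᵀ * Sinv τ) with hB
  set Fh : ℝ → Matrix (Fin D) (Fin D) ℝ := fun τ => F τ + B τ with hFh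
  -- the candidate solution
  set n : ℝ → Fin D → ℝ := fun τ => Ψ τ *ᵥ (u_s - r) + Ψh τ *ᵥ r with hn
  have hn_eq : ∀ t, n t = Ψ t *ᵥ u_s + (Ψh t - Ψ t) *ᵥ r := by
    intro t
    simp only [hn, Matrix.mulVec_sub, Matrix.sub_mulVec]
    abel
  -- continuity of Fh on I
  have hFhc : ContinuousOn Fh I := by
    apply hF.add
    exact ContinuousOn.const_smul
      ((hG.mul ((Continuous.matrix_transpose continuous_id).comp_continuousOn hG)).mul hSinv) ((1 + lam^2)/2 : ℝ)
  -- continuity of B on I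
  have hBc : ContinuousOn B I :=
    ContinuousOn.const_smul
      ((hG.mul ((Continuous.matrix_transpose continuous_id).comp_continuousOn hG)).mul hSinv) ((1 + lam^2)/2 : ℝ)
  -- derivative of n
  have hn' : ∀ τ ∈ I, HasDerivAt n
      (Fh τ *ᵥ n τ + B τ *ᵥ (Ψ τ *ᵥ (r - u_s))) τ := by
    intro τ hτ
    have h1 := hasDerivAt_mulVec (hΨ τ hτ) (u_s - r)
    have h2 := hasDerivAt_mulVec (hΨh τ hτ) r
    have := h1.add h2
    refine this.congr_deriv ?_
    simp only [hn, hFh, hB, Matrix.add_mulVec, Matrix.mulVec_add, Matrix.mulVec_sub,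
      ← Matrix.mulVec_mulVec]
    abel
  -- derivative of m, rewritten
  have hm' : ∀ τ ∈ I, HasDerivAt m
      (Fh τ *ᵥ m τ + B τ *ᵥ (Ψ τ *ᵥ (r - u_s))) τ := fun τ hτ => hm τ hτ
  -- main uniqueness argument
  intro t ht
  have key : ∀ a b : ℝ, Icc a b ⊆ I →
      ∃ K : NNReal, ∀ τ : ℝ,
        LipschitzWith K (fun x : Fin D → ℝ =>
          if τ ∈ Icc a b then Fh τ *ᵥ x + B τ *ᵥ (Ψ τ *ᵥ (r - u_s)) else 0) := by
    intro a b hJI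
    set J := Icc a b with hJ
    have hJc : IsCompact J := isCompact_Icc
    have hcont : ContinuousOn (fun τ => ‖matCLM D (Fh τ)‖) J :=
      (continuous_norm.comp (matCLM D).continuous_of_finiteDimensional).comp_continuousOn
        (hFhc.mono hJI)
    obtain ⟨C, hC⟩ := hJc.exists_bound_of_continuousOn hcont
    refine ⟨Real.toNNReal C, fun τ => ?_⟩
    by_cases hτ : τ ∈ J
    · simp only [show τ ∈ Icc a b from hτ, ↓reduceIte]
      apply LipschitzWith.of_dist_le_mul
      intro x y
      have h1 : (Fh τ *ᵥ x + B τ *ᵥ (Ψ τ *ᵥ (r - u_s))) -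
          (Fh τ *ᵥ y + B τ *ᵥ (Ψ τ *ᵥ (r - u_s))) = matCLM D (Fh τ) (x - y) := by
        simp [matCLM_apply, Matrix.mulVec_sub]
      rw [dist_eq_norm, h1]
      calc ‖matCLM D (Fh τ) (x - y)‖ ≤ ‖matCLM D (Fh τ)‖ * ‖x - y‖ :=
            (matCLM D (Fh τ)).le_opNorm _
        _ ≤ (Real.toNNReal C : ℝ) * dist x y := by
            rw [dist_eq_norm]
            apply mul_le_mul_of_nonneg_right _ (norm_nonneg _)
            calc ‖matCLM D (Fh τ)‖ ≤ ‖‖matCLM D (Fh τ)‖‖ := le_abs_self _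
              _ ≤ C := hC τ hτ
              _ ≤ Real.toNNReal C := Real.le_coe_toNNReal C
    · simp only [show τ ∉ Icc a b from hτ, ↓reduceIte]
      exact (LipschitzWith.const 0).weaken zero_le
  have hns : n s = u_s := by
    simp [hn, hΨs, hΨhs, Matrix.one_mulVec]
  rcases le_total s t with hst | hst
  · -- forward in time: use Icc s t
    have hJI : Icc s t ⊆ I := hI.ordConnected.out hs ht
    obtain ⟨K, hK⟩ := key s t hJI
    have heq := ODE_solution_unique (E := Fin D → ℝ) (v := fun τ x =>
        if τ ∈ Icc s t then Fh τ *ᵥ x + B τ *ᵥ (Ψ τ *ᵥ (r - u_s)) else 0)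
      hK
      (fun τ hτ => (hm' τ (hJI hτ)).continuousAt.continuousWithinAt)
      (fun τ hτ => by
        have hmem := Ico_subset_Icc_self hτ
        simpa [hmem] using (hm' τ (hJI hmem)).hasDerivWithinAt (s := Ici τ))
      (fun τ hτ => (hn' τ (hJI hτ)).continuousAt.continuousWithinAt)
      (fun τ hτ => by
        have hmem := Ico_subset_Icc_self hτ
        simpa [hmem] using (hn' τ (hJI hmem)).hasDerivWithinAt (s := Ici τ))
      (by rw [hms, hns])
    have := heq ⟨hst, le_rfl⟩
    rw [this, hn_eq]
  · -- backward in time: use Icc t s with initial condition at s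
    have hJI : Icc t s ⊆ I := hI.ordConnected.out ht hs
    obtain ⟨K, hK⟩ := key t s hJI
    have heq := ODE_solution_unique_of_mem_Icc_left (E := Fin D → ℝ) (v := fun τ x =>
        if τ ∈ Icc t s then Fh τ *ᵥ x + B τ *ᵥ (Ψ τ *ᵥ (r - u_s)) else 0)
      (s := fun _ => Set.univ)
      (fun τ _ => (hK τ).lipschitzOnWith (s := Set.univ))
      (fun τ hτ => (hm' τ (hJI hτ)).continuousAt.continuousWithinAt)
      (fun τ hτ => by
        have hmem := Ioc_subset_Icc_self hτ
        simpa [hmem] using (hm' τ (hJI hmem)).hasDerivWithinAt (s := Iic τ))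
      (fun _ _ => trivial)
      (fun τ hτ => (hn' τ (hJI hτ)).continuousAt.continuousWithinAt)
      (fun τ hτ => by
        have hmem := Ioc_subset_Icc_self hτ
        simpa [hmem] using (hn' τ (hJI hmem)).hasDerivWithinAt (s := Iic τ))
      (fun _ _ => trivial)
      (by rw [hms, hns])
    have := heq ⟨le_rfl, hst⟩
    rw [this, hn_eq]
end

section
/- Let D, q ∈ ℕ with q ≥ 1, let F, G : ℝ → ℝ^{D×D} be continuous on an interval I, let R : ℝ → ℝ^{D×D} have R_τ invertible with τ ↦ R_τ⁻ᵀ continuous on I, and let t_{i-1} < t_i < t_{i+1} < ⋯ < t_{i+q-1} be points of I. Given ε_0, …, ε_{q-1} ∈ ℝ^D, define the Lagrange interpolant ε_p(τ) := Σ_{j=0}^{q-1} (Π_{k≠j} (τ − t_{i+k})/(t_{i+j} − t_{i+k}))·ε_j. Let M : ℝ → ℝ^{D×D} be differentiable with M'(τ) = −M(τ)·F_τ and M(t_{i-1}) = I (so M(τ) = Ψ(t_{i-1},τ)). If u : ℝ → ℝ^D is differentiable on I and satisfies u'(τ) = F_τ·u(τ) + (1/2) G_τ G_τᵀ R_τ⁻ᵀ·ε_p(τ)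 for all τ ∈ I, then u(t_{i-1}) = M(t_i)·u(t_i) + Σ_{j=0}^{q-1} C_{ij}·ε_j, where C_{ij} := ∫_{t_i}^{t_{i-1}} (1/2) M(τ)·G_τ G_τᵀ R_τ⁻ᵀ·(Π_{k≠j} (τ − t_{i+k})/(t_{i+j} − t_{i+k})) dτ. -/
open Matrix

attribute [local instance] Matrix.normedAddCommGroup Matrix.normedSpace

section Aux

variable {D : ℕ}

/-- Multiplication by a matrix on a fixed vector, as a continuous linear map in the matrix. -/
noncomputable def mulVecRightCLM (D : ℕ) (x : Fin D → ℝ) :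
    Matrix (Fin D) (Fin D) ℝ →L[ℝ] (Fin D → ℝ) :=
  LinearMap.toContinuousLinearMap
    { toFun := fun A => A *ᵥ x
      map_add' := fun A B => Matrix.add_mulVec A B x
      map_smul' := fun c A => Matrix.smul_mulVec c A x }

lemma mulVecRightCLM_apply (x : Fin D → ℝ) (A : Matrix (Fin D) (Fin D) ℝ) :
    mulVecRightCLM D x A = A *ᵥ x := rfl

lemma hasDerivAt_entry {M : ℝ → Matrix (Fin D) (Fin D) ℝ}
    {M' : Matrix (Fin D) (Fin D) ℝ} {x : ℝ} (h : HasDerivAt M M' x) (i j : Fin D) :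
    HasDerivAt (fun τ => M τ i j) (M' i j) x :=
  hasDerivAt_pi.mp (hasDerivAt_pi.mp h i) j

lemma hasDerivAt_mulVec_s17 {M : ℝ → Matrix (Fin D) (Fin D) ℝ}
    {u : ℝ → Fin D → ℝ} {M' : Matrix (Fin D) (Fin D) ℝ} {u' : Fin D → ℝ} {x : ℝ}
    (hM : HasDerivAt M M' x) (hu : HasDerivAt u u' x) :
    HasDerivAt (fun τ => M τ *ᵥ u τ) (M' *ᵥ u x + M x *ᵥ u') x := by
  rw [hasDerivAt_pi]
  intro i
  simp only [Matrix.mulVec, dotProduct, Pi.add_apply]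
  rw [← Finset.sum_add_distrib]
  exact HasDerivAt.fun_sum fun k _ =>
    ((hasDerivAt_entry hM i k).mul (hasDerivAt_pi.mp hu k))

lemma continuousOn_matrix_mul {s : Set ℝ} {f g : ℝ → Matrix (Fin D) (Fin D) ℝ}
    (hf : ContinuousOn f s) (hg : ContinuousOn g s) :
    ContinuousOn (fun τ => f τ * g τ) s := by
  rw [continuousOn_iff_continuous_restrict] at *
  exact hf.matrix_mul hg

lemma continuousOn_matrix_mulVec {s : Set ℝ} {f : ℝ → Matrix (Fin D) (Fin D) ℝ}
    {g : ℝ → Fin D → ℝ} (hf : ContinuousOn f s) (hg : ContinuousOn g s) :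
    ContinuousOn (fun τ => f τ *ᵥ g τ) s := by
  rw [continuousOn_iff_continuous_restrict] at *
  exact hf.matrix_mulVec hg

lemma continuousOn_matrix_transpose {s : Set ℝ} {f : ℝ → Matrix (Fin D) (Fin D) ℝ}
    (hf : ContinuousOn f s) : ContinuousOn (fun τ => (f τ)ᵀ) s := by
  rw [continuousOn_iff_continuous_restrict] at *
  exact hf.matrix_transpose

noncomputable instance matENormedAddMonoid (D : ℕ) : ENormedAddMonoid (Matrix (Fin D) (Fin D) ℝ) :=
  NormedAddGroup.toENormedAddMonoid

end Aux

/-- The q-step exponential multistep predictor of gDDIM: the exact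
solution of the probability flow ODE with the Lagrange-interpolated network output
`ε_p(τ)` satisfies `u(t_{i-1}) = Ψ(t_{i-1},t_i)·u(t_i) + Σ_j C_{ij}·ε_j`. -/
theorem gddim_multistep_predictor (D q : ℕ) (hq : 0 < q)
    (I : Set ℝ) (hI : Convex ℝ I)
    (F G R M : ℝ → Matrix (Fin D) (Fin D) ℝ)
    (hF : ContinuousOn F I) (hG : ContinuousOn G I)
    (hRinv : ∀ τ ∈ I, IsUnit (R τ))
    (hRcont : ContinuousOn (fun τ => ((R τ)⁻¹)ᵀ) I)
    (tm : ℝ) (ts : Fin q → ℝ) (htm : tm ∈ I) (hts : ∀ j, ts j ∈ I)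
    (hlt : tm < ts ⟨0, hq⟩) (hmono : StrictMono ts)
    (ε : Fin q → Fin D → ℝ)
    (hM : ∀ τ ∈ I, HasDerivAt M (-(M τ * F τ)) τ) (hMtm : M tm = 1)
    (u : ℝ → Fin D → ℝ)
    (hu : ∀ τ ∈ I, HasDerivAt u
      (F τ *ᵥ u τ + ((1/2 : ℝ) • (G τ * (G τ)ᵀ * ((R τ)⁻¹)ᵀ)) *ᵥ
        (∑ j, (∏ k ∈ Finset.univ.erase j, (τ - ts k) / (ts j - ts k)) • ε j)) τ) :
    u tm = M (ts ⟨0, hq⟩) *ᵥ u (ts ⟨0, hq⟩) +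
      ∑ j, (∫ τ in (ts ⟨0, hq⟩)..tm,
        ((1/2 : ℝ) * ∏ k ∈ Finset.univ.erase j, (τ - ts k) / (ts j - ts k)) •
          (M τ * (G τ * (G τ)ᵀ * ((R τ)⁻¹)ᵀ))) *ᵥ ε j := by
  set t0 : ℝ := ts ⟨0, hq⟩ with ht0
  have hsub : Set.uIcc t0 tm ⊆ I := by
    have := hI.ordConnected
    exact this.uIcc_subset (hts _) htm
  -- Lagrange basis polynomials
  set L : Fin q → ℝ → ℝ := fun j τ => ∏ k ∈ Finset.univ.erase j, (τ - ts k) / (ts j - ts k)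
    with hL
  -- continuity facts on I
  have hMcont : ContinuousOn M I := fun τ hτ => (hM τ hτ).continuousAt.continuousWithinAt
  have hA : ContinuousOn (fun τ => G τ * (G τ)ᵀ * ((R τ)⁻¹)ᵀ) I :=
    continuousOn_matrix_mul (continuousOn_matrix_mul hG (continuousOn_matrix_transpose hG))
      hRcont
  have hLcont : ∀ j, ContinuousOn (L j) I := fun j =>
    (continuous_finset_prod _ fun k _ =>
      ((continuous_id.sub continuous_const).div_const _)).continuousOn
  -- the combined function v = M * u
  set v : ℝ → Fin D → ℝ := fun τ => M τ *ᵥ u τ with hv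
  -- derivative of v on the interval
  have hvderiv : ∀ τ ∈ Set.uIcc t0 tm,
      HasDerivAt v ((M τ * ((1/2 : ℝ) • (G τ * (G τ)ᵀ * ((R τ)⁻¹)ᵀ))) *ᵥ
        (∑ j, L j τ • ε j)) τ := by
    intro τ hτ
    have hτI : τ ∈ I := hsub hτ
    have h := hasDerivAt_mulVec_s17 (hM τ hτI) (hu τ hτI)
    convert h using 1
    rw [Matrix.mulVec_add, Matrix.neg_mulVec, ← Matrix.mulVec_mulVec,
      ← Matrix.mulVec_mulVec]
    abel
  -- integrability of the derivative
  have hintegrand : ContinuousOn (fun τ => (M τ * ((1/2 : ℝ) • (G τ * (G τ)ᵀ * ((R τ)⁻¹)ᵀ))) *ᵥ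
      (∑ j, L j τ • ε j)) (Set.uIcc t0 tm) := by
    apply continuousOn_matrix_mulVec
    · exact continuousOn_matrix_mul (hMcont.mono hsub) ((hA.const_smul (1/2 : ℝ) : ContinuousOn (fun τ => (1/2 : ℝ) • (G τ * (G τ)ᵀ * ((R τ)⁻¹)ᵀ)) I).mono hsub)
    · apply continuousOn_finset_sum _
      intro j _
      exact ((hLcont j).mono hsub).smul continuousOn_const
  -- FTC
  have hFTC := intervalIntegral.integral_eq_sub_of_hasDerivAt
    (f := v) (a := t0) (b := tm)
    (fun τ hτ => hvderiv τ hτ)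
    (hintegrand.intervalIntegrable)
  -- rewrite integrand as a sum
  have hptwise : ∀ τ,
      (M τ * ((1/2 : ℝ) • (G τ * (G τ)ᵀ * ((R τ)⁻¹)ᵀ))) *ᵥ (∑ j, L j τ • ε j)
      = ∑ j, (((1/2 : ℝ) * L j τ) • (M τ * (G τ * (G τ)ᵀ * ((R τ)⁻¹)ᵀ))) *ᵥ ε j := by
    intro τ
    simp only [← Matrix.mulVecLin_apply, map_sum, _root_.map_smul]
    refine Finset.sum_congr rfl fun j _ => ?_
    simp only [Matrix.mulVecLin_apply, mul_smul_comm, Matrix.mulVec_smul,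
      Matrix.smul_mulVec, Matrix.mulVecBilin_apply]
    rw [smul_smul, mul_comm]
    rfl
  -- integrability of each summand's matrix part
  have hBij : ∀ j : Fin q, IntervalIntegrable
      (fun τ => ((1/2 : ℝ) * L j τ) • (M τ * (G τ * (G τ)ᵀ * ((R τ)⁻¹)ᵀ))) MeasureTheory.volume t0 tm := by
    intro j
    apply ContinuousOn.intervalIntegrable
    exact (((continuousOn_const.mul (hLcont j)).mono hsub).smul
      ((continuousOn_matrix_mul hMcont hA).mono hsub))
  -- compute the integral
  have hintsum : (∫ τ in t0..tm,
      (M τ * ((1/2 : ℝ) • (G τ * (G τ)ᵀ * ((R τ)⁻¹)ᵀ))) *ᵥ (∑ j, L j τ • ε j))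
      = ∑ j, (∫ τ in t0..tm,
        ((1/2 : ℝ) * L j τ) • (M τ * (G τ * (G τ)ᵀ * ((R τ)⁻¹)ᵀ))) *ᵥ ε j := by
    simp_rw [hptwise]
    rw [intervalIntegral.integral_finset_sum]
    · congr 1
      funext j
      rw [← mulVecRightCLM_apply (ε j)]
      exact ContinuousLinearMap.intervalIntegral_comp_comm (mulVecRightCLM D (ε j)) (hBij j)
    · intro j _
      apply ContinuousOn.intervalIntegrable
      exact continuousOn_matrix_mulVec
        (((continuousOn_const.mul (hLcont j)).smul
          (continuousOn_matrix_mul hMcont hA)).mono hsub) continuousOn_const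
  rw [hintsum] at hFTC
  have hvt : v tm = u tm := by simp [hv, hMtm]
  have hvt0 : v t0 = M t0 *ᵥ u t0 := rfl
  rw [hvt, hvt0] at hFTC
  have h2 : (∑ j : Fin q, (∫ τ in t0..tm,
      ((1/2 : ℝ) * ∏ k ∈ Finset.univ.erase j, (τ - ts k) / (ts j - ts k)) •
        (M τ * (G τ * (G τ)ᵀ * ((R τ)⁻¹)ᵀ))) *ᵥ ε j) = u tm - M t0 *ᵥ u t0 := hFTC
  rw [h2]
  abel
end
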